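/- Let (G_ω, r) be a strictly increasing weighted tree with edge ideal I(G_ω). Then for all subsets W₁ ⊊ W₂ of the minimal generating set G(I(G_ω)), the least common multiples satisfy lcm(W₁) ≠ lcm(W₂). -/

import Mathlib

open MvPolynomial SimpleGraph

/-- The weight function `ω` on the edges of `G` is weakly increasing along every
simple path from a leaf to the root `r`. -/
def IsIncreasingRoot {n : ℕ} (G : SimpleGraph (Fin n)) [DecidableRel G.Adj]
    (ω : Sym2 (Fin n) → ℕ) (r : Fin n) : Prop :=
  ∀ v : Fin n, G.degree v = 1 → ∀ p : G.Walk v r, p.IsPath →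
    ∀ i : ℕ, i + 2 < p.support.length →
      ω s(p.support.getD i v, p.support.getD (i + 1) v) ≤
        ω s(p.support.getD (i + 1) v, p.support.getD (i + 2) v)

/-- The weight function `ω` is strictly increasing along every simple path from a leaf
to the root `r`. -/
def IsStrictlyIncreasingRoot {n : ℕ} (G : SimpleGraph (Fin n)) [DecidableRel G.Adj]
    (ω : Sym2 (Fin n) → ℕ) (r : Fin n) : Prop :=
  ∀ v : Fin n, G.degree v = 1 → ∀ p : G.Walk v r, p.IsPath →
    ∀ i : ℕ, i + 2 < p.support.length →
      ω s(p.support.getD i v, p.support.getD (i + 1) v) <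
        ω s(p.support.getD (i + 1) v, p.support.getD (i + 2) v)

/-- A vertex `v₂` is special: there is a simple path `v₁ → v₂ → v₃ → ⋯ → r` from a leaf `v₁`
of length at least 2 with `ω(v₁v₂) = ω(v₂v₃)`. -/
def IsSpecialVertex {n : ℕ} (G : SimpleGraph (Fin n)) [DecidableRel G.Adj]
    (ω : Sym2 (Fin n) → ℕ) (r : Fin n) (v₂ : Fin n) : Prop :=
  ∃ (v₁ : Fin n) (p : G.Walk v₁ r), G.degree v₁ = 1 ∧ p.IsPath ∧ 2 ≤ p.length ∧
    p.support.getD 1 v₁ = v₂ ∧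
    ω s(p.support.getD 0 v₁, p.support.getD 1 v₁) =
      ω s(p.support.getD 1 v₁, p.support.getD 2 v₁)

/-- An edge `uv` is special: there is a simple path `v₁ → u → v → ⋯ → r` (at least 3 vertices)
with `ω(v₁u) = ω(uv)`. -/
def IsSpecialEdge {n : ℕ} (G : SimpleGraph (Fin n))
    (ω : Sym2 (Fin n) → ℕ) (r : Fin n) (e : Sym2 (Fin n)) : Prop :=
  ∃ (v₁ : Fin n) (p : G.Walk v₁ r), p.IsPath ∧ 2 ≤ p.length ∧
    e = s(p.support.getD 1 v₁, p.support.getD 2 v₁) ∧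
    ω s(p.support.getD 0 v₁, p.support.getD 1 v₁) =
      ω s(p.support.getD 1 v₁, p.support.getD 2 v₁)

/-- `μ(v)`: the maximal weight of an edge at `v`. -/
def muWeight {n : ℕ} (G : SimpleGraph (Fin n)) [DecidableRel G.Adj]
    (ω : Sym2 (Fin n) → ℕ) (v : Fin n) : ℕ :=
  (G.neighborFinset v).sup fun u => ω s(u, v)

/-- The set `A(G_ω)` of vertices admitting a simple path `v = v₁ → ⋯ → v_{2m}` (`m ≥ 1`)
with `ω(v_{2m-1}v_{2m}) < μ(v_{2m})`. -/
def Aset {n : ℕ} (G : SimpleGraph (Fin n)) [DecidableRel G.Adj]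
    (ω : Sym2 (Fin n) → ℕ) : Set (Fin n) :=
  {v | ∃ (m : ℕ) (w : Fin n) (p : G.Walk v w), 1 ≤ m ∧ p.IsPath ∧
    p.support.length = 2 * m ∧
    ω s(p.support.getD (2 * m - 2) v, w) < muWeight G ω w}

/-- The exponent vector of the monomial generator `(x_i x_j)^{ω(e)}` attached to an
edge `e = {i, j}`; the lcm of a set of such monomials has exponent vector the
pointwise sup (`Finset.sup`) of the exponent vectors. -/
def edgeExp {n : ℕ} (ω : Sym2 (Fin n) → ℕ) (e : Sym2 (Fin n)) : Fin n → ℕ :=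
  fun x => if x ∈ e then ω e else 0

/-!
Orient an edge `e ∈ W₂ \ W₁` as `uv` with `v` on the path from `u` to the root. Any simple path
to the root extends backwards to one starting at a leaf, so weights increase strictly along it;
in particular every other edge at `u` is lighter than `uv`. Hence the exponent of `x_u` is below
`ω(uv)` in `lcm W₁` but equals `ω(uv)` in `lcm W₂`.
-/

namespace SimpleGraph

variable {V : Type*} {G : SimpleGraph V}

lemma Walk.support_getD_eq_getVert {u v : V} (p : G.Walk u v) {i : ℕ} (hi : i ≤ p.length)
    (d : V) : p.support.getD i d = p.getVert i := by
  rw [List.getD_eq_getElem _ _ (by rw [Walk.length_support]; omega), Walk.support_getElem_eq_getVert]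

theorem IsAcyclic.exists_degree_eq_one_append_isPath [Fintype V] [DecidableRel G.Adj]
    (hG : G.IsAcyclic) {x r : V} (p : G.Walk x r) (hp : p.IsPath) (hx : G.degree x ≠ 0) :
    ∃ (ℓ : V) (q : G.Walk ℓ x), G.degree ℓ = 1 ∧ (q.append p).IsPath := by
  by_cases hx₁ : G.degree x = 1
  · exact ⟨x, .nil, hx₁, by simpa⟩
  obtain ⟨y, hy, hy_snd⟩ := Finset.exists_mem_ne (s := G.neighborFinset x) (by
    rw [card_neighborFinset_eq_degree]; omega) p.snd
  have hxy : G.Adj x y := (mem_neighborFinset G x y).mp hy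
  have hyp : y ∉ p.support := fun h => hy_snd (hG.eq_snd_of_adj_start hp hxy h)
  have hp' : (Walk.cons hxy.symm p).IsPath := hp.cons hyp
  obtain ⟨ℓ, q, hℓ, hq⟩ := hG.exists_degree_eq_one_append_isPath _ hp'
    (G.degree_pos_iff_exists_adj y |>.mpr ⟨x, hxy.symm⟩).ne'
  exact ⟨ℓ, q.concat hxy.symm, hℓ, by rwa [Walk.concat_append]⟩
termination_by Fintype.card V - p.length
decreasing_by
  have hlen := hp'.length_lt
  simp only [Walk.length_cons] at hlen ⊢
  omega

theorem IsAcyclic.exists_isPath_cons_of_adj (hG : G.IsAcyclic) {a b r : V}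
    (hr : G.Reachable a r) (hab : G.Adj a b) :
    ∃ (u v : V) (huv : G.Adj u v) (q : G.Walk v r), s(u, v) = s(a, b) ∧
      (Walk.cons huv q).IsPath := by
  obtain ⟨p, hp⟩ := hr.exists_isPath
  by_cases hb : b ∈ p.support
  · cases p with
    | nil => exact absurd (by simpa using hb) hab.ne'
    | cons h q =>
      obtain rfl : b = _ := hG.eq_snd_of_adj_start hp hab hb
      exact ⟨a, _, h, q, by simp, hp⟩
  · exact ⟨b, a, hab.symm, p, Sym2.eq_swap, hp.cons hb⟩

end SimpleGraph

section StrictlyIncreasing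

variable {n : ℕ} {G : SimpleGraph (Fin n)} [DecidableRel G.Adj] {ω : Sym2 (Fin n) → ℕ}
  {r : Fin n}

theorem IsStrictlyIncreasingRoot.weight_lt (hroot : IsStrictlyIncreasingRoot G ω r)
    (hG : G.IsAcyclic) {b u v : Fin n} (hbu : G.Adj b u) (huv : G.Adj u v) (q : G.Walk v r)
    (hp : (Walk.cons hbu (Walk.cons huv q)).IsPath) : ω s(b, u) < ω s(u, v) := by
  obtain ⟨ℓ, p, hℓ, hpath⟩ := hG.exists_degree_eq_one_append_isPath _ hp
    (G.degree_pos_iff_exists_adj b |>.mpr ⟨u, hbu⟩).ne'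
  have hincr := hroot ℓ hℓ _ hpath p.length (by simp)
  rw [Walk.support_getD_eq_getVert _ (by simp), Walk.support_getD_eq_getVert _ (by simp),
    Walk.support_getD_eq_getVert _ (by simp)] at hincr
  simpa [Walk.getVert_append] using hincr

theorem IsStrictlyIncreasingRoot.weight_lt_of_adj (hroot : IsStrictlyIncreasingRoot G ω r)
    (hG : G.IsAcyclic) {u v b : Fin n} (huv : G.Adj u v) (q : G.Walk v r)
    (hp : (Walk.cons huv q).IsPath) (hub : G.Adj u b) (hbv : b ≠ v) :
    ω s(u, b) < ω s(u, v) := by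
  have hb : b ∉ (Walk.cons huv q).support := fun h =>
    hbv (by simpa using hG.eq_snd_of_adj_start hp hub h)
  rw [Sym2.eq_swap]
  exact hroot.weight_lt hG hub.symm huv q (hp.cons hb)

end StrictlyIncreasing

section EdgeExp

variable {n : ℕ} {ω : Sym2 (Fin n) → ℕ}

theorem le_sup_edgeExp_apply {W : Finset (Sym2 (Fin n))} {e : Sym2 (Fin n)} (he : e ∈ W)
    {x : Fin n} (hx : x ∈ e) : ω e ≤ W.sup (edgeExp ω) x := by
  simpa [edgeExp, hx] using Finset.le_sup (f := edgeExp ω) he x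

theorem sup_edgeExp_apply_lt {W : Finset (Sym2 (Fin n))} {x : Fin n} {a : ℕ} (ha : 0 < a)
    (h : ∀ f ∈ W, x ∈ f → ω f < a) : W.sup (edgeExp ω) x < a := by
  rw [Finset.sup_apply, Finset.sup_lt_iff ha]
  intro f hf
  by_cases hx : x ∈ f
  · simpa [edgeExp, hx] using h f hf hx
  · simpa [edgeExp, hx] using ha

end EdgeExp

/-- **Lemma.** Let `(G_ω, r)` be a strictly increasing weighted tree. For subsets
`W₁ ⊊ W₂` of the minimal generating set of `I(G_ω)` (identified with subsets of the
edge set of `G`), the lcm's of `W₁` and `W₂` differ: their exponent vectors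
(pointwise sups of the generators' exponent vectors) are distinct. -/
theorem lcm_strict_monotone_of_strictly_increasing {n : ℕ} (G : SimpleGraph (Fin n))
    [DecidableRel G.Adj] (ω : Sym2 (Fin n) → ℕ) (r : Fin n)
    (htree : G.IsTree) (hpos : ∀ e ∈ G.edgeSet, 1 ≤ ω e)
    (hroot : IsStrictlyIncreasingRoot G ω r) :
    ∀ W₁ W₂ : Finset (Sym2 (Fin n)), W₁ ⊆ G.edgeFinset → W₂ ⊆ G.edgeFinset →
      W₁ ⊂ W₂ → W₁.sup (edgeExp ω) ≠ W₂.sup (edgeExp ω) := by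
  intro W₁ W₂ hW₁ hW₂ hW heq
  obtain ⟨e, he₂, he₁⟩ := Finset.exists_of_ssubset hW
  induction e using Sym2.ind with | _ a b => ?_
  have hab : G.Adj a b := mem_edgeFinset.mp (hW₂ he₂)
  obtain ⟨u, v, huv, q, he, hp⟩ :=
    htree.isAcyclic.exists_isPath_cons_of_adj (htree.connected.preconnected a r) hab
  rw [← he] at he₁ he₂
  have hlt : W₁.sup (edgeExp ω) u < ω s(u, v) := by
    refine sup_edgeExp_apply_lt (hpos _ huv) fun f hf hu => ?_
    rw [← Sym2.other_spec hu] at hf ⊢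
    refine hroot.weight_lt_of_adj htree.isAcyclic huv q hp (mem_edgeFinset.mp (hW₁ hf)) ?_
    rintro rfl
    exact he₁ hf
  have hle : ω s(u, v) ≤ W₂.sup (edgeExp ω) u := le_sup_edgeExp_apply he₂ (Sym2.mem_mk_left u v)
  exact (congrFun heq u ▸ hlt).not_ge hle
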